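/- arXiv:0706.3535 — 11 statements merged into one kernel-verified Lean document; each statement's English description precedes it below -/
import Mathlib

section
/- If (a,b) ∈ B is even with a ≥ 1, a+b ≥ 1, b ≠ 0, then the singleton {(a,b)} is unavoidable in the bicyclic semigroup B; in particular there exist three pairwise distinct elements p, q, r of B such that each of the products pq, rq, rp (in some arrangement) equals (a,b), forming an odd cycle in the associated graph. -/
/-- Membership in the bicyclic semigroup `B = {(a,b) : a ≥ 0, a+b ≥ 0}`. -/
def inB (p : ℤ × ℤ) : Prop := 0 ≤ p.1 ∧ 0 ≤ p.1 + p.2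

/-- Bicyclic multiplication `(a,b)(c,d) = (max (c+d) a - d, b+d)`. -/
def bmul (p q : ℤ × ℤ) : ℤ × ℤ := (max (q.1 + q.2) p.1 - q.2, p.2 + q.2)

/-- Adjoint `(a,b)* = (a+b, -b)`. -/
def bstar (p : ℤ × ℤ) : ℤ × ℤ := (p.1 + p.2, -p.2)

/-- The partition `{A ∩ B, B \ A}` avoids `U`: no element of `U` is a product of
two distinct elements of the same class. -/
def Avoids (A U : Set (ℤ × ℤ)) : Prop :=
  ∀ s t : ℤ × ℤ, inB s → inB t → s ≠ t → (s ∈ A ↔ t ∈ A) → bmul s t ∉ U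

/-- `U` is avoidable in the bicyclic semigroup. -/
def Avoidable (U : Set (ℤ × ℤ)) : Prop := ∃ A : Set (ℤ × ℤ), Avoids A U

theorem stmt5 (a b : ℤ) (hab : inB (a, b)) (hb : Even b) (ha : 1 ≤ a)
    (hab1 : 1 ≤ a + b) (hb0 : b ≠ 0) :
    ¬ Avoidable {(a, b)} ∧
    ∃ p q r : ℤ × ℤ, inB p ∧ inB q ∧ inB r ∧ p ≠ q ∧ q ≠ r ∧ p ≠ r ∧
      bmul p q = (a, b) ∧ bmul r q = (a, b) ∧ bmul r p = (a, b) := by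
  obtain ⟨k, hk⟩ := hb
  subst hk
  obtain ⟨hab', hab''⟩ := hab
  simp only at hab' hab''
  set p1 : ℤ := max 0 (-k) with hp1
  set p : ℤ × ℤ := (p1, k) with hp
  set q : ℤ × ℤ := (a, k) with hq
  set r : ℤ × ℤ := (a + k, k) with hr
  have hk0 : k ≠ 0 := by omega
  have hip : inB p := by constructor <;> simp [hp, hp1] <;> omega
  have hiq : inB q := by constructor <;> simp [hq] <;> omega
  have hir : inB r := by constructor <;> simp [hr] <;> omega
  have hpq : p ≠ q := by simp [hp, hq, Prod.ext_iff, hp1]; omega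
  have hqr : q ≠ r := by simp [hq, hr, Prod.ext_iff]; omega
  have hpr : p ≠ r := by simp [hp, hr, Prod.ext_iff, hp1]; omega
  have e1 : bmul p q = (a, k + k) := by
    simp [bmul, hp, hq, Prod.ext_iff, hp1]; omega
  have e2 : bmul r q = (a, k + k) := by
    simp [bmul, hr, hq, Prod.ext_iff]
  have e3 : bmul r p = (a, k + k) := by
    simp [bmul, hr, hp, Prod.ext_iff, hp1]; omega
  refine ⟨?_, p, q, r, hip, hiq, hir, hpq, hqr, hpr, e1, e2, e3⟩
  rintro ⟨A, hA⟩
  by_cases h1 : p ∈ A <;> by_cases h2 : q ∈ A <;> by_cases h3 : r ∈ A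
  · exact hA p q hip hiq hpq (by tauto) (by rw [e1]; rfl)
  · exact hA p q hip hiq hpq (by tauto) (by rw [e1]; rfl)
  · exact hA r p hir hip hpr.symm (by tauto) (by rw [e3]; rfl)
  · exact hA r q hir hiq hqr.symm (by tauto) (by rw [e2]; rfl)
  · exact hA r q hir hiq hqr.symm (by tauto) (by rw [e2]; rfl)
  · exact hA r p hir hip hpr.symm (by tauto) (by rw [e3]; rfl)
  · exact hA p q hip hiq hpq (by tauto) (by rw [e1]; rfl)
  · exact hA p q hip hiq hpq (by tauto) (by rw [e1]; rfl)
end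

section
/- If a ≥ 2 is even, c ≥ 0, and c+d ≥ 1, then U = {(a,−a), (c,d)} is unavoidable in the bicyclic semigroup B: the three distinct elements r = (a/2, −a/2), s = (a/2 + 1, −a/2), t = (c, d + a/2) of B form a triangle, with rs = (a,−a), st = (c,d), and rt = (c,d). -/
theorem stmt6 (a c d : ℤ) (ha : 2 ≤ a) (hae : Even a) (hc : 0 ≤ c) (hcd : 1 ≤ c + d) :
    ¬ Avoidable {(a, -a), (c, d)} ∧
    (let r : ℤ × ℤ := (a / 2, -(a / 2));
     let s : ℤ × ℤ := (a / 2 + 1, -(a / 2));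
     let t : ℤ × ℤ := (c, d + a / 2);
     inB r ∧ inB s ∧ inB t ∧ r ≠ s ∧ s ≠ t ∧ r ≠ t ∧
       bmul r s = (a, -a) ∧ bmul s t = (c, d) ∧ bmul r t = (c, d)) := by
  obtain ⟨e, he⟩ := hae
  have hea : a / 2 = e := by omega
  set r : ℤ × ℤ := (a / 2, -(a / 2)) with hrdef
  set s : ℤ × ℤ := (a / 2 + 1, -(a / 2)) with hsdef
  set t : ℤ × ℤ := (c, d + a / 2) with htdef
  have hir : inB r := by simp [inB, hrdef, hea]; omega
  have his : inB s := by simp [inB, hsdef, hea]; omega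
  have hit : inB t := by simp [inB, htdef, hea]; omega
  have hrs : r ≠ s := by simp [hrdef, hsdef, Prod.ext_iff]
  have hst : s ≠ t := by simp [hsdef, htdef, Prod.ext_iff, hea]; omega
  have hrt : r ≠ t := by simp [hrdef, htdef, Prod.ext_iff, hea]; omega
  have h1 : bmul r s = (a, -a) := by
    simp [bmul, hrdef, hsdef, hea, Prod.ext_iff]; omega
  have h2 : bmul s t = (c, d) := by
    simp [bmul, hsdef, htdef, hea, Prod.ext_iff]; omega
  have h3 : bmul r t = (c, d) := by
    simp [bmul, hrdef, htdef, hea, Prod.ext_iff]; omega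
  refine ⟨?_, hir, his, hit, hrs, hst, hrt, h1, h2, h3⟩
  rintro ⟨A, hA⟩
  by_cases hr : r ∈ A <;> by_cases hs : s ∈ A <;> by_cases ht : t ∈ A
  · exact hA r s hir his hrs (iff_of_true hr hs) (by rw [h1]; simp)
  · exact hA r s hir his hrs (iff_of_true hr hs) (by rw [h1]; simp)
  · exact hA r t hir hit hrt (iff_of_true hr ht) (by rw [h3]; simp)
  · exact hA s t his hit hst (iff_of_false hs ht) (by rw [h2]; simp)
  · exact hA s t his hit hst (iff_of_true hs ht) (by rw [h2]; simp)
  · exact hA r t hir hit hrt (iff_of_false hr ht) (by rw [h3]; simp)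
  · exact hA r s hir his hrs (iff_of_false hr hs) (by rw [h1]; simp)
  · exact hA r s hir his hrs (iff_of_false hr hs) (by rw [h1]; simp)
end

section
/- If a and c are distinct even integers with a, c ≥ 2, then U = {(a,−a), (c,−c)} is unavoidable in the bicyclic semigroup B. -/
lemma key8 (a c : ℤ) (ha : 2 ≤ a) (hae : Even a) (hlt : a < c) :
    ¬ Avoidable {(a, -a), (c, -c)} := by
  rintro ⟨A, hA⟩
  obtain ⟨k, hk⟩ := hae
  have hk1 : 1 ≤ k := by omega
  have hs : inB (k, -k) := by constructor <;> simp <;> omega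
  have ht : inB (k + 1, -k) := by constructor <;> simp <;> omega
  have hu : inB (c - k, k - c) := by constructor <;> simp <;> omega
  have hst : ((k : ℤ), -k) ≠ (k + 1, -k) := by simp [Prod.ext_iff]
  have hsu : ((k : ℤ), -k) ≠ (c - k, k - c) := by simp [Prod.ext_iff]; omega
  have hut : ((c : ℤ) - k, k - c) ≠ (k + 1, -k) := by simp [Prod.ext_iff]; omega
  have e1 : bmul (k, -k) (k + 1, -k) = (a, -a) := by
    simp only [bmul, Prod.ext_iff]; constructor <;> omega
  have e2 : bmul (k, -k) (c - k, k - c) = (c, -c) := by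
    simp only [bmul, Prod.ext_iff]; constructor <;> omega
  have e3 : bmul (c - k, k - c) (k + 1, -k) = (c, -c) := by
    simp only [bmul, Prod.ext_iff]; constructor <;> omega
  have m1 : ¬ ((k, -k) ∈ A ↔ (k + 1, -k) ∈ A) :=
    fun h => hA _ _ hs ht hst h (by rw [e1]; left; rfl)
  have m2 : ¬ ((k, -k) ∈ A ↔ (c - k, k - c) ∈ A) :=
    fun h => hA _ _ hs hu hsu h (by rw [e2]; right; rfl)
  have m3 : ¬ ((c - k, k - c) ∈ A ↔ (k + 1, -k) ∈ A) :=
    fun h => hA _ _ hu ht hut h (by rw [e3]; right; rfl)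
  tauto

theorem stmt8 (a c : ℤ) (ha : 2 ≤ a) (hc : 2 ≤ c) (hae : Even a) (hce : Even c)
    (hac : a ≠ c) : ¬ Avoidable {(a, -a), (c, -c)} := by
  rcases lt_or_gt_of_ne hac with h | h
  · exact key8 a c ha hae h
  · rw [Set.pair_comm]
    exact key8 c a hc hce h
end

section
/- If a ≥ 2 is even, c and e are odd with 0 < c < e ≤ a/2, then U = {(a,−a), (c,−c), (e,−e)} is unavoidable in the bicyclic semigroup B: the elements r = (0, (a−c−e)/2), s = ((a+c−e)/2, −(a+c−e)/2), t = ((a−c+e)/2, −(a−c+e)/2) are pairwise distinct elements of B with sr = (c,−c), st = (a,−a), tr = (e,−e). -/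
theorem stmt9 (a c e : ℤ) (ha : 2 ≤ a) (hae : Even a) (hc : Odd c) (he : Odd e)
    (h0c : 0 < c) (hce : c < e) (hea : e ≤ a / 2) :
    ¬ Avoidable {(a, -a), (c, -c), (e, -e)} ∧
    (let r : ℤ × ℤ := (0, (a - c - e) / 2);
     let s : ℤ × ℤ := ((a + c - e) / 2, -((a + c - e) / 2));
     let t : ℤ × ℤ := ((a - c + e) / 2, -((a - c + e) / 2));
     inB r ∧ inB s ∧ inB t ∧ r ≠ s ∧ s ≠ t ∧ r ≠ t ∧
       bmul s r = (c, -c) ∧ bmul s t = (a, -a) ∧ bmul t r = (e, -e)) := by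
  have hc2 : c % 2 = 1 := Int.odd_iff.mp hc
  have he2 : e % 2 = 1 := Int.odd_iff.mp he
  have ha2 : a % 2 = 0 := Int.even_iff.mp hae
  set r : ℤ × ℤ := (0, (a - c - e) / 2) with hrdef
  set s : ℤ × ℤ := ((a + c - e) / 2, -((a + c - e) / 2)) with hsdef
  set t : ℤ × ℤ := ((a - c + e) / 2, -((a - c + e) / 2)) with htdef
  have hbr : inB r := by constructor <;> simp [inB, hrdef] <;> omega
  have hbs : inB s := by constructor <;> simp [inB, hsdef] <;> omega
  have hbt : inB t := by constructor <;> simp [inB, htdef] <;> omega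
  have hrs : r ≠ s := by simp [hrdef, hsdef, Prod.ext_iff]; omega
  have hst : s ≠ t := by simp [hsdef, htdef, Prod.ext_iff]; omega
  have hrt : r ≠ t := by simp [hrdef, htdef, Prod.ext_iff]; omega
  have p1 : bmul s r = (c, -c) := by
    simp only [bmul, hrdef, hsdef, Prod.mk.injEq]
    constructor <;> omega
  have p2 : bmul s t = (a, -a) := by
    simp only [bmul, htdef, hsdef, Prod.mk.injEq]
    constructor <;> omega
  have p3 : bmul t r = (e, -e) := by
    simp only [bmul, hrdef, htdef, Prod.mk.injEq]
    constructor <;> omega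
  refine ⟨?_, hbr, hbs, hbt, hrs, hst, hrt, p1, p2, p3⟩
  rintro ⟨A, hA⟩
  by_cases hrA : r ∈ A <;> by_cases hsA : s ∈ A <;> by_cases htA : t ∈ A
  · exact (hA s r hbs hbr (Ne.symm hrs) (by tauto)) (by rw [p1]; simp)
  · exact (hA s r hbs hbr (Ne.symm hrs) (by tauto)) (by rw [p1]; simp)
  · exact (hA t r hbt hbr (Ne.symm hrt) (by tauto)) (by rw [p3]; simp)
  · exact (hA s t hbs hbt hst (by tauto)) (by rw [p2]; simp)
  · exact (hA s t hbs hbt hst (by tauto)) (by rw [p2]; simp)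
  · exact (hA t r hbt hbr (Ne.symm hrt) (by tauto)) (by rw [p3]; simp)
  · exact (hA s r hbs hbr (Ne.symm hrs) (by tauto)) (by rw [p1]; simp)
  · exact (hA s r hbs hbr (Ne.symm hrs) (by tauto)) (by rw [p1]; simp)
end

section
/- If a ≥ 2 is even and 0 < c < a/2, then U = {(a,−a), (c,−c), (0,0)} is unavoidable in the bicyclic semigroup B: the five pairwise distinct elements p = (0,0), q = (c,−c), r = (a−c, −(a−c)), s = (0, a−c), t = (a,−a) satisfy pq = (c,−c), qr = (a,−a), rs = (0,0), ts = (c,−c), pt = (a,−a), forming a 5-cycle in the associated graph. -/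
theorem stmt10 (a c : ℤ) (ha : 2 ≤ a) (hae : Even a) (h0c : 0 < c) (hca : c < a / 2) :
    ¬ Avoidable {(a, -a), (c, -c), (0, 0)} ∧
    (let p : ℤ × ℤ := (0, 0);
     let q : ℤ × ℤ := (c, -c);
     let r : ℤ × ℤ := (a - c, -(a - c));
     let s : ℤ × ℤ := (0, a - c);
     let t : ℤ × ℤ := (a, -a);
     inB p ∧ inB q ∧ inB r ∧ inB s ∧ inB t ∧
       p ≠ q ∧ p ≠ r ∧ p ≠ s ∧ p ≠ t ∧ q ≠ r ∧ q ≠ s ∧ q ≠ t ∧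
       r ≠ s ∧ r ≠ t ∧ s ≠ t ∧
       bmul p q = (c, -c) ∧ bmul q r = (a, -a) ∧ bmul r s = (0, 0) ∧
       bmul t s = (c, -c) ∧ bmul p t = (a, -a)) := by
  obtain ⟨k, hk⟩ := hae
  have h2c : 2 * c < a := by omega
  set P : ℤ × ℤ := (0, 0) with hP
  set Q : ℤ × ℤ := (c, -c) with hQ
  set R : ℤ × ℤ := (a - c, -(a - c)) with hR
  set S : ℤ × ℤ := (0, a - c) with hS
  set T : ℤ × ℤ := (a, -a) with hT
  have hiP : inB P := by simp [inB, hP]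
  have hiQ : inB Q := by constructor <;> simp [hQ] <;> omega
  have hiR : inB R := by constructor <;> simp [hR] <;> omega
  have hiS : inB S := by constructor <;> simp [hS] <;> omega
  have hiT : inB T := by constructor <;> simp [hT] <;> omega
  have nPQ : P ≠ Q := by simp only [hP, hQ, ne_eq, Prod.mk.injEq, not_and]; intro h; omega
  have nPR : P ≠ R := by simp only [hP, hR, ne_eq, Prod.mk.injEq, not_and]; intro h; omega
  have nPS : P ≠ S := by simp only [hP, hS, ne_eq, Prod.mk.injEq, not_and]; intro h; omega
  have nPT : P ≠ T := by simp only [hP, hT, ne_eq, Prod.mk.injEq, not_and]; intro h; omega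
  have nQR : Q ≠ R := by simp only [hQ, hR, ne_eq, Prod.mk.injEq, not_and]; intro h; omega
  have nQS : Q ≠ S := by simp only [hQ, hS, ne_eq, Prod.mk.injEq, not_and]; intro h; omega
  have nQT : Q ≠ T := by simp only [hQ, hT, ne_eq, Prod.mk.injEq, not_and]; intro h; omega
  have nRS : R ≠ S := by simp only [hR, hS, ne_eq, Prod.mk.injEq, not_and]; intro h; omega
  have nRT : R ≠ T := by simp only [hR, hT, ne_eq, Prod.mk.injEq, not_and]; intro h; omega
  have nST : S ≠ T := by simp only [hS, hT, ne_eq, Prod.mk.injEq, not_and]; intro h; omega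
  have mPQ : bmul P Q = (c, -c) := by
    simp only [bmul, hP, hQ, Prod.mk.injEq]; constructor <;> omega
  have mQR : bmul Q R = (a, -a) := by
    simp only [bmul, hQ, hR, Prod.mk.injEq]; constructor <;> omega
  have mRS : bmul R S = (0, 0) := by
    simp only [bmul, hR, hS, Prod.mk.injEq]; constructor <;> omega
  have mTS : bmul T S = (c, -c) := by
    simp only [bmul, hT, hS, Prod.mk.injEq]; constructor <;> omega
  have mPT : bmul P T = (a, -a) := by
    simp only [bmul, hP, hT, Prod.mk.injEq]; constructor <;> omega
  refine ⟨?_, hiP, hiQ, hiR, hiS, hiT, nPQ, nPR, nPS, nPT, nQR, nQS, nQT,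
    nRS, nRT, nST, mPQ, mQR, mRS, mTS, mPT⟩
  rintro ⟨A, hA⟩
  have key : ∀ u v : ℤ × ℤ, inB u → inB v → u ≠ v →
      bmul u v ∈ ({(a, -a), (c, -c), (0, 0)} : Set (ℤ × ℤ)) → ¬ (u ∈ A ↔ v ∈ A) :=
    fun u v hu hv hne hm hiff => hA u v hu hv hne hiff hm
  have e1 := key P Q hiP hiQ nPQ (by rw [mPQ]; simp)
  have e2 := key Q R hiQ hiR nQR (by rw [mQR]; simp)
  have e3 := key R S hiR hiS nRS (by rw [mRS]; simp)
  have e4 := key T S hiT hiS nST.symm (by rw [mTS]; simp)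
  have e5 := key P T hiP hiT nPT (by rw [mPT]; simp)
  tauto
end

section
/- If a ≥ 2 is even, c is odd, and 0 < c < a/2, then U = {(a,−a), (c,−c)} is avoidable in the bicyclic semigroup B. -/
/-- Auxiliary coloring of idempotents, periodic with period `a - c` on `[1, ∞)`. -/
def hFun (a c i : ℤ) : Bool :=
  if i ≤ 0 then false
  else if (i - 1) % (a - c) + 1 < c then decide (2 * ((i - 1) % (a - c) + 1) < c)
  else decide (2 * ((i - 1) % (a - c) + 1) < a)

lemma hFun_window (a c i : ℤ) (h1 : 1 ≤ i) (h2 : i ≤ a - c) :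
    hFun a c i = if i < c then decide (2 * i < c) else decide (2 * i < a) := by
  have hp : (i - 1) % (a - c) = i - 1 := Int.emod_eq_of_lt (by omega) (by omega)
  have h3 : ¬ i ≤ 0 := by omega
  have h4 : i - 1 + 1 = i := by omega
  simp only [hFun, hp, h4, if_neg h3]

lemma hFun_period (a c i : ℤ) (hac : c < a) (h1 : 1 ≤ i) :
    hFun a c (i + (a - c)) = hFun a c i := by
  have he : i + (a - c) - 1 = i - 1 + (a - c) * 1 := by ring
  have hp : (i + (a - c) - 1) % (a - c) = (i - 1) % (a - c) := by
    rw [he, Int.add_mul_emod_self_left]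
  have h2 : ¬ i ≤ 0 := by omega
  have h3 : ¬ i + (a - c) ≤ 0 := by omega
  simp only [hFun, hp, if_neg h2, if_neg h3]

lemma hFun_zero (a c : ℤ) : hFun a c 0 = false := by simp [hFun]

lemma hFun_top (a c : ℤ) (h2c : 2 * c < a) (h0c : 0 < c) : hFun a c a = true := by
  have h := hFun_period a c c (by omega) (by omega)
  have he : c + (a - c) = a := by ring
  rw [he] at h
  rw [h, hFun_window a c c (by omega) (by omega), if_neg (by omega)]
  simp
  omega

lemma lemA (a c m : ℤ) (h2c : 2 * c < a) (h0c : 0 < c) (hcodd : c % 2 = 1)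
    (h0 : 0 ≤ m) (hm : m ≤ a) (hne : 2 * m ≠ a) :
    hFun a c m ≠ hFun a c (a - m) := by
  have key : ∀ n : ℤ, 1 ≤ n → n ≤ c - 1 → hFun a c n ≠ hFun a c (a - n) := by
    intro n hn1 hn2
    have hwin : hFun a c n = decide (2 * n < c) := by
      rw [hFun_window a c n (by omega) (by omega), if_pos (by omega)]
    have he : a - n = (c - n) + (a - c) := by ring
    have hwin2 : hFun a c (a - n) = decide (2 * (c - n) < c) := by
      rw [he, hFun_period a c (c - n) (by omega) (by omega),
        hFun_window a c (c - n) (by omega) (by omega), if_pos (by omega)]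
    rw [hwin, hwin2]
    simp only [ne_eq, decide_eq_decide]
    omega
  rcases eq_or_ne m 0 with rfl | hm0
  · have h1 : a - 0 = a := by ring
    rw [hFun_zero, h1, hFun_top a c h2c h0c]; simp
  rcases eq_or_ne m a with hma | hma
  · have h1 : a - m = 0 := by omega
    rw [h1, hma, hFun_top a c h2c h0c, hFun_zero]; simp
  -- now 1 ≤ m ≤ a - 1
  rcases le_or_gt m (c - 1) with h | h
  · exact key m (by omega) h
  rcases le_or_gt (a - c + 1) m with h' | h'
  · have := key (a - m) (by omega) (by omega)
    have he : a - (a - m) = m := by ring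
    rw [he] at this
    exact this.symm
  · -- c ≤ m ≤ a - c
    have hwin : hFun a c m = decide (2 * m < a) := by
      rw [hFun_window a c m (by omega) (by omega), if_neg (by omega)]
    have hwin2 : hFun a c (a - m) = decide (2 * (a - m) < a) := by
      rw [hFun_window a c (a - m) (by omega) (by omega), if_neg (by omega)]
    rw [hwin, hwin2]
    simp only [ne_eq, decide_eq_decide]
    omega

lemma lemB (a c m : ℤ) (h2c : 2 * c < a) (h0c : 0 < c) (hcodd : c % 2 = 1)
    (h0 : 0 ≤ m) (hm : m ≤ c) : hFun a c m ≠ hFun a c (c - m) := by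
  have hctop : hFun a c c = true := by
    rw [hFun_window a c c (by omega) (by omega), if_neg (by omega)]
    simp; omega
  have key : ∀ n : ℤ, 1 ≤ n → n ≤ c - 1 → hFun a c n = decide (2 * n < c) := by
    intro n hn1 hn2
    rw [hFun_window a c n (by omega) (by omega), if_pos (by omega)]
  rcases eq_or_ne m 0 with rfl | hm0
  · have h1 : c - 0 = c := by ring
    rw [hFun_zero, h1, hctop]; simp
  rcases eq_or_ne m c with hmc | hmc
  · have h1 : c - m = 0 := by omega
    rw [h1, hmc, hFun_zero, hctop]; simp
  · rw [key m (by omega) (by omega), key (c - m) (by omega) (by omega)]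
    simp only [ne_eq, decide_eq_decide]
    omega

/-- The full coloring on pairs. -/
def chi (a c : ℤ) (s : ℤ × ℤ) : Bool :=
  if s.1 + s.2 = 0 then hFun a c (-s.2) else !(hFun a c (a + s.2))

theorem stmt11 (a c : ℤ) (ha : 2 ≤ a) (hae : Even a) (hc : Odd c) (h0c : 0 < c)
    (hca : c < a / 2) : Avoidable {(a, -a), (c, -c)} := by
  obtain ⟨k, hk⟩ := hae
  obtain ⟨j, hj⟩ := hc
  have h2c : 2 * c < a := by omega
  have hcodd : c % 2 = 1 := by omega
  refine ⟨{s | chi a c s = true}, ?_⟩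
  intro s t hs ht hne hiff hmem
  have hst : chi a c s = chi a c t := by
    simp only [Set.mem_setOf_eq] at hiff
    by_cases h1 : chi a c s = true <;> by_cases h2 : chi a c t = true <;> simp_all
  have hmax1 : s.1 ≤ max (t.1 + t.2) s.1 := le_max_right _ _
  have hmax2 : t.1 + t.2 ≤ max (t.1 + t.2) s.1 := le_max_left _ _
  have hmc := max_choice (t.1 + t.2) s.1
  obtain ⟨hs1, hs2⟩ := hs
  obtain ⟨ht1, ht2⟩ := ht
  simp only [Set.mem_insert_iff, Set.mem_singleton_iff] at hmem
  -- common analysis for product = (n, -n)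
  have main : ∀ n : ℤ, 0 < n → bmul s t = (n, -n) →
      (s.1 + s.2 = 0 ∧ t.2 = -s.2 - n ∧ 0 ≤ t.1 + t.2 ∧ t.1 + t.2 ≤ s.1) := by
    intro n hn hbe
    rw [bmul, Prod.ext_iff] at hbe
    simp only at hbe
    obtain ⟨hb1, hb2⟩ := hbe
    constructor
    · omega
    refine ⟨by omega, ht2, by omega⟩
  rcases hmem with hU | hU
  · -- product is (a, -a)
    obtain ⟨hsl, htd, htl0, htl⟩ := main a (by omega) hU
    set m := s.1 with hmdef
    have hchis : chi a c s = hFun a c m := by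
      rw [chi, if_pos hsl]
      congr 1
      omega
    by_cases hcase : t.1 + t.2 = 0
    · have hchit : chi a c t = hFun a c (a - m) := by
        rw [chi, if_pos hcase]
        congr 1
        omega
      have h2m : 2 * m ≠ a := by
        intro h2m
        apply hne
        have : s.2 = -m := by omega
        have ht1e : t.1 = a - m := by omega
        have ht2e : t.2 = m - a := by omega
        have : t.1 = s.1 := by omega
        have : t.2 = s.2 := by omega
        exact Prod.ext (by omega) (by omega)
      have hma : m ≤ a := by omega
      exact lemA a c m h2c h0c hcodd hs1 hma h2m (hchis ▸ hchit ▸ hst)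
    · have hchit : chi a c t = !(hFun a c m) := by
        rw [chi, if_neg hcase]
        congr 2
        omega
      rw [hchis, hchit] at hst
      exact absurd hst (by simp)
  · -- product is (c, -c)
    obtain ⟨hsl, htd, htl0, htl⟩ := main c (by omega) hU
    set m := s.1 with hmdef
    have hchis : chi a c s = hFun a c m := by
      rw [chi, if_pos hsl]
      congr 1
      omega
    by_cases hcase : t.1 + t.2 = 0
    · have hchit : chi a c t = hFun a c (c - m) := by
        rw [chi, if_pos hcase]
        congr 1
        omega
      have hmc' : m ≤ c := by omega
      exact lemB a c m h2c h0c hcodd hs1 hmc' (hchis ▸ hchit ▸ hst)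
    · have hchit : chi a c t = !(hFun a c (m + (a - c))) := by
        rw [chi, if_neg hcase]
        congr 2
        omega
      have hm1 : 1 ≤ m := by omega
      rw [hFun_period a c m (by omega) hm1] at hchit
      rw [hchis, hchit] at hst
      exact absurd hst (by simp)
end

section
/- If a ≥ 2 is even and a/2 is odd, then U = {(a,−a), (a/2, −a/2), (0,0)} is avoidable in the bicyclic semigroup B. -/
theorem stmt12 (a : ℤ) (ha : 2 ≤ a) (hae : Even a) (hao : Odd (a / 2)) :
    Avoidable {(a, -a), (a / 2, -(a / 2)), (0, 0)} := by
  obtain ⟨c, hc⟩ := hae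
  obtain ⟨q, hq⟩ := hao
  set h : ℤ := a / 2 with hh
  have hah : a = 2 * h := by omega
  have hhq : h = 2 * q + 1 := hq
  have hq0 : 0 ≤ q := by omega
  have hpos : 0 < h := by omega
  set g : ℤ → Prop := fun y => 1 ≤ y % h ∧ y % h ≤ q with hg
  have emod_small : ∀ m : ℤ, 0 ≤ m → m < h → m % h = m :=
    fun m h1 h2 => Int.emod_eq_of_lt h1 h2
  have hmodh : h % h = 0 := Int.emod_self
  have hmod2h : (2 * h) % h = 0 := by
    rw [show 2 * h = 0 + h * 2 by ring, Int.add_mul_emod_self_left, Int.zero_emod]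
  -- F m ≠ F k when m + k = h
  have L1 : ∀ m k : ℤ, 0 ≤ m → 0 ≤ k → m + k = h → ¬((m = 0 ∨ g m) ↔ (k = 0 ∨ g k)) := by
    intro m k hm hk hmk hiff
    rcases eq_or_ne m 0 with rfl | hm0
    · have hk' : k = h := by omega
      subst hk'
      simp only [hg, hmodh, Int.zero_emod, true_or, or_true, true_iff, iff_true] at hiff
      omega
    · rcases eq_or_ne k 0 with rfl | hk0
      · have hm' : m = h := by omega
        subst hm'
        simp only [hg, hmodh, Int.zero_emod, true_or, or_true, true_iff, iff_true] at hiff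
        omega
      · have e1 : m % h = m := emod_small m hm (by omega)
        have e2 : k % h = k := emod_small k hk (by omega)
        simp only [hg, e1, e2] at hiff
        omega
  -- F m ≠ F k when m + k = 2h, m ≠ k
  have L2 : ∀ m k : ℤ, 0 ≤ m → 0 ≤ k → m + k = 2 * h → m ≠ k →
      ¬((m = 0 ∨ g m) ↔ (k = 0 ∨ g k)) := by
    intro m k hm hk hmk hne hiff
    rcases eq_or_ne m 0 with rfl | hm0
    · have hk' : k = 2 * h := by omega
      subst hk'
      simp only [hg, hmod2h, Int.zero_emod, true_or, or_true, true_iff, iff_true] at hiff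
      omega
    · rcases eq_or_ne k 0 with rfl | hk0
      · have hm' : m = 2 * h := by omega
        subst hm'
        simp only [hg, hmod2h, Int.zero_emod, true_or, or_true, true_iff, iff_true] at hiff
        omega
      · have hmh : m ≠ h := by intro e; apply hne; omega
        rcases lt_or_gt_of_ne hmh with hlt | hgt
        · have e1 : m % h = m := emod_small m hm hlt
          have e2 : k % h = k - h := by
            calc k % h = (k - h + h * 1) % h := by ring_nf
              _ = (k - h) % h := Int.add_mul_emod_self_left ..
              _ = k - h := emod_small (k - h) (by omega) (by omega)
          simp only [hg, e1, e2] at hiff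
          omega
        · have e1 : m % h = m - h := by
            calc m % h = (m - h + h * 1) % h := by ring_nf
              _ = (m - h) % h := Int.add_mul_emod_self_left ..
              _ = m - h := emod_small (m - h) (by omega) (by omega)
          have e2 : k % h = k := emod_small k hk (by omega)
          simp only [hg, e1, e2] at hiff
          omega
  refine ⟨{p | if p.1 + p.2 = 0 then (p.1 = 0 ∨ g p.1) else ¬ g p.2}, ?_⟩
  rintro ⟨x1, y1⟩ ⟨x2, y2⟩ hs ht hne hiff hU
  obtain ⟨hs1, hs2⟩ := hs
  obtain ⟨ht1, ht2'⟩ := ht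
  simp only [inB] at hs1 hs2 ht1 ht2'
  simp only [Set.mem_insert_iff, Set.mem_singleton_iff, bmul, Prod.mk.injEq] at hU
  set M := max (x2 + y2) x1 with hM
  have hM1 : x2 + y2 ≤ M := le_max_left _ _
  have hM2 : x1 ≤ M := le_max_right _ _
  have key : ∃ n : ℤ, (n = 2 * h ∨ n = h ∨ n = 0) ∧ M - y2 = n ∧ y1 + y2 = -n := by
    rcases hU with ⟨h1, h2⟩ | ⟨h1, h2⟩ | ⟨h1, h2⟩
    · exact ⟨2 * h, Or.inl rfl, by omega, by omega⟩
    · exact ⟨h, Or.inr (Or.inl rfl), by omega, by omega⟩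
    · exact ⟨0, Or.inr (Or.inr rfl), by omega, by omega⟩
  obtain ⟨n, hn, hE1, hE2⟩ := key
  have hy1 : y1 = -x1 := by omega
  have hle : x2 + y2 ≤ x1 := by omega
  have hy2 : y2 = x1 - n := by omega
  simp only [Set.mem_setOf_eq] at hiff
  rw [if_pos (by omega : x1 + y1 = 0)] at hiff
  by_cases htid : x2 + y2 = 0
  · rw [if_pos htid] at hiff
    have hk : x2 = n - x1 := by omega
    rcases hn with rfl | rfl | rfl
    · refine L2 x1 x2 hs1 ht1 (by omega) ?_ hiff
      intro e; apply hne; simp only [Prod.mk.injEq]; omega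
    · exact L1 x1 x2 hs1 ht1 (by omega) hiff
    · apply hne; simp only [Prod.mk.injEq]; omega
  · rw [if_neg htid] at hiff
    have hm1 : 1 ≤ x1 := by omega
    have hmod : x1 % h = y2 % h := by
      rcases hn with rfl | rfl | rfl
      · rw [show x1 = y2 + h * 2 by omega, Int.add_mul_emod_self_left]
      · rw [show x1 = y2 + h * 1 by omega, Int.add_mul_emod_self_left]
      · rw [show x1 = y2 + h * 0 by omega, Int.add_mul_emod_self_left]
    have hgs : g x1 ↔ g y2 := by simp only [hg, hmod]
    rw [or_iff_right (by omega : ¬ x1 = 0), hgs] at hiff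
    exact iff_not_self hiff
end

section
/- If a ≠ c, a ≥ 1, c ≥ 1, then U = {(a,0), (c,0)} is unavoidable in the bicyclic semigroup B. -/
theorem stmt16 (a c : ℤ) (ha : 1 ≤ a) (hc : 1 ≤ c) (hac : a ≠ c) :
    ¬ Avoidable {(a, 0), (c, 0)} := by
  rintro ⟨A, h⟩
  have h1 : ¬ (((0 : ℤ), (0 : ℤ)) ∈ A ↔ ((a, (0 : ℤ)) ∈ A)) := fun hiff =>
    h (0, 0) (a, 0) (by simp [inB]) (by simp [inB]; omega)
      (by simp [Prod.ext_iff]; omega) hiff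
      (by left; simp [bmul, Prod.ext_iff]; omega)
  have h2 : ¬ (((0 : ℤ), (0 : ℤ)) ∈ A ↔ ((c, (0 : ℤ)) ∈ A)) := fun hiff =>
    h (0, 0) (c, 0) (by simp [inB]) (by simp [inB]; omega)
      (by simp [Prod.ext_iff]; omega) hiff
      (by right; simp [bmul, Prod.ext_iff]; omega)
  have h3 : ¬ (((a : ℤ), (0 : ℤ)) ∈ A ↔ ((c, (0 : ℤ)) ∈ A)) := fun hiff =>
    h (a, 0) (c, 0) (by simp [inB]; omega) (by simp [inB]; omega)
      (by simp [Prod.ext_iff]; omega) hiff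
      (by rcases le_total a c with hle | hle
          · right; simp [bmul, Prod.ext_iff]; omega
          · left; simp [bmul, Prod.ext_iff]; omega)
  tauto
end

section
/- If a ≥ 1, d and f are odd with d ≠ f, and (c,d), (e,f) ∈ B satisfy max(c, c+d, e, e+f) < a, then U = {(a,0), (c,d), (e,f)} is unavoidable in the bicyclic semigroup B. -/
lemma inB_mk {x y : ℤ} (h1 : 0 ≤ x) (h2 : 0 ≤ x + y) : inB (x, y) := ⟨h1, h2⟩

/-- Band constancy: on each row `p`, all elements with first coordinate in
`[max 0 (-p), max 0 (-p) + a]` (other than `(a,0)` itself) lie in the same class. -/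
lemma band_eq (A U : Set (ℤ × ℤ)) (a : ℤ) (ha : 1 ≤ a) (haU : ((a : ℤ), (0 : ℤ)) ∈ U)
    (hA : Avoids A U) (p x y : ℤ)
    (hx1 : max 0 (-p) ≤ x) (hx2 : x ≤ max 0 (-p) + a)
    (hy1 : max 0 (-p) ≤ y) (hy2 : y ≤ max 0 (-p) + a)
    (hxa : ¬(x = a ∧ p = 0)) (hya : ¬(y = a ∧ p = 0)) :
    ((x, p) ∈ A ↔ (y, p) ∈ A) := by
  rcases le_or_gt p 0 with hp | hp
  · have hx : ¬(((x, p) ∈ A) ↔ ((a, -p) ∈ A)) := by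
      intro hiff
      refine hA (x, p) (a, -p) (inB_mk (by omega) (by omega)) (inB_mk (by omega) (by omega))
        (by intro hst; rw [Prod.mk.injEq] at hst; omega) hiff ?_
      rw [show bmul (x, p) (a, -p) = (a, 0) from by
        simp only [bmul, Prod.mk.injEq]; omega]
      exact haU
    have hy : ¬(((y, p) ∈ A) ↔ ((a, -p) ∈ A)) := by
      intro hiff
      refine hA (y, p) (a, -p) (inB_mk (by omega) (by omega)) (inB_mk (by omega) (by omega))
        (by intro hst; rw [Prod.mk.injEq] at hst; omega) hiff ?_
      rw [show bmul (y, p) (a, -p) = (a, 0) from by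
        simp only [bmul, Prod.mk.injEq]; omega]
      exact haU
    tauto
  · have hx : ¬(((a + p, -p) ∈ A) ↔ ((x, p) ∈ A)) := by
      intro hiff
      refine hA (a + p, -p) (x, p) (inB_mk (by omega) (by omega)) (inB_mk (by omega) (by omega))
        (by intro hst; rw [Prod.mk.injEq] at hst; omega) hiff ?_
      rw [show bmul (a + p, -p) (x, p) = (a, 0) from by
        simp only [bmul, Prod.mk.injEq]; omega]
      exact haU
    have hy : ¬(((a + p, -p) ∈ A) ↔ ((y, p) ∈ A)) := by
      intro hiff
      refine hA (a + p, -p) (y, p) (inB_mk (by omega) (by omega)) (inB_mk (by omega) (by omega))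
        (by intro hst; rw [Prod.mk.injEq] at hst; omega) hiff ?_
      rw [show bmul (a + p, -p) (y, p) = (a, 0) from by
        simp only [bmul, Prod.mk.injEq]; omega]
      exact haU
    tauto

set_option maxHeartbeats 1000000 in
lemma key (A : Set (ℤ × ℤ)) (a c d e f : ℤ) (ha : 1 ≤ a) (hd : Odd d) (hf : Odd f)
    (hdf : d < f) (hc0 : 0 ≤ c) (hcd0 : 0 ≤ c + d) (he0 : 0 ≤ e) (hef0 : 0 ≤ e + f)
    (hca : c < a) (hcda : c + d < a) (hea : e < a) (hefa : e + f < a)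
    (hA : Avoids A {(a, 0), (c, d), (e, f)}) : False := by
  obtain ⟨dk, hdk⟩ := hd
  obtain ⟨fk, hfk⟩ := hf
  have haU : ((a : ℤ), (0 : ℤ)) ∈ ({(a, 0), (c, d), (e, f)} : Set (ℤ × ℤ)) := by
    simp
  have hcdU : ((c : ℤ), (d : ℤ)) ∈ ({(a, 0), (c, d), (e, f)} : Set (ℤ × ℤ)) := by
    simp
  have hefU : ((e : ℤ), (f : ℤ)) ∈ ({(a, 0), (c, d), (e, f)} : Set (ℤ × ℤ)) := by
    simp
  have step : ∀ s t : ℤ × ℤ, inB s → inB t → s ≠ t →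
      bmul s t ∈ ({(a, 0), (c, d), (e, f)} : Set (ℤ × ℤ)) → ¬((s ∈ A) ↔ (t ∈ A)) :=
    fun s t h1 h2 h3 h4 h5 => hA s t h1 h2 h3 h5 h4
  -- F1 : row -(f-d) rep (c+f) vs row f rep c ; product (c,d)
  have F1 : ¬(((c + f, -(f - d)) ∈ A) ↔ ((c, f) ∈ A)) := by
    refine step _ _ (inB_mk (by omega) (by omega)) (inB_mk (by omega) (by omega))
      (by intro hst; rw [Prod.mk.injEq] at hst; omega) ?_
    rw [show bmul (c + f, -(f - d)) (c, f) = (c, d) from by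
      simp only [bmul, Prod.mk.injEq]; omega]
    exact hcdU
  -- F2 : row f : c and e
  have F2 : ((c, f) ∈ A ↔ (e, f) ∈ A) :=
    band_eq A _ a ha haU hA f c e (by omega) (by omega) (by omega) (by omega)
      (by omega) (by omega)
  -- F3 : product (e,f) from rows f and 0
  have F3 : ¬(((e, f) ∈ A) ↔ ((e, 0) ∈ A)) := by
    refine step _ _ (inB_mk (by omega) (by omega)) (inB_mk (by omega) (by omega))
      (by intro hst; rw [Prod.mk.injEq] at hst; omega) ?_
    rw [show bmul (e, f) (e, 0) = (e, f) from by
      simp only [bmul, Prod.mk.injEq]; omega]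
    exact hefU
  -- F4 : row 0 : e and c+d
  have F4 : ((e, (0 : ℤ)) ∈ A ↔ (c + d, (0 : ℤ)) ∈ A) :=
    band_eq A _ a ha haU hA 0 e (c + d) (by omega) (by omega) (by omega) (by omega)
      (by omega) (by omega)
  -- F5 : product (c,d) from rows 0 and d
  have F5 : ¬(((c + d, (0 : ℤ)) ∈ A) ↔ ((c, d) ∈ A)) := by
    refine step _ _ (inB_mk (by omega) (by omega)) (inB_mk (by omega) (by omega))
      (by intro hst; rw [Prod.mk.injEq] at hst; omega) ?_
    rw [show bmul (c + d, 0) (c, d) = (c, d) from by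
      simp only [bmul, Prod.mk.injEq]; omega]
    exact hcdU
  -- F6 : row d : c and e + (f - d)
  have F6 : ((c, d) ∈ A ↔ (e + (f - d), d) ∈ A) :=
    band_eq A _ a ha haU hA d c (e + (f - d)) (by omega) (by omega) (by omega) (by omega)
      (by omega) (by omega)
  -- F7 : product (e,f) from rows d and f-d
  have F7 : ¬(((e + (f - d), d) ∈ A) ↔ ((e, f - d) ∈ A)) := by
    refine step _ _ (inB_mk (by omega) (by omega)) (inB_mk (by omega) (by omega))
      (by intro hst; rw [Prod.mk.injEq] at hst; omega) ?_
    rw [show bmul (e + (f - d), d) (e, f - d) = (e, f) from by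
      simp only [bmul, Prod.mk.injEq]; omega]
    exact hefU
  -- F8 : product (a,0) from rows -(f-d) and f-d
  have F8 : ¬(((a + (f - d), -(f - d)) ∈ A) ↔ ((e, f - d) ∈ A)) := by
    refine step _ _ (inB_mk (by omega) (by omega)) (inB_mk (by omega) (by omega))
      (by intro hst; rw [Prod.mk.injEq] at hst; omega) ?_
    rw [show bmul (a + (f - d), -(f - d)) (e, f - d) = (a, 0) from by
      simp only [bmul, Prod.mk.injEq]; omega]
    exact haU
  -- F9 : row -(f-d) : a + (f-d) and c + f
  have F9 : ((a + (f - d), -(f - d)) ∈ A ↔ (c + f, -(f - d)) ∈ A) :=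
    band_eq A _ a ha haU hA (-(f - d)) (a + (f - d)) (c + f) (by omega) (by omega)
      (by omega) (by omega) (by omega) (by omega)
  tauto

theorem stmt17 (a c d e f : ℤ) (ha : 1 ≤ a) (hd : Odd d) (hf : Odd f) (hdf : d ≠ f)
    (hcd : inB (c, d)) (hef : inB (e, f))
    (h : max (max c (c + d)) (max e (e + f)) < a) :
    ¬ Avoidable {(a, 0), (c, d), (e, f)} := by
  rintro ⟨A, hA⟩
  obtain ⟨hc0, hcd0⟩ := hcd
  obtain ⟨he0, hef0⟩ := hef
  simp only at hc0 hcd0 he0 hef0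
  rcases lt_trichotomy d f with hlt | heq | hgt
  · exact key A a c d e f ha hd hf hlt hc0 hcd0 he0 hef0
      (by omega) (by omega) (by omega) (by omega) hA
  · exact hdf heq
  · have hU : ({(a, 0), (e, f), (c, d)} : Set (ℤ × ℤ)) = {(a, 0), (c, d), (e, f)} := by
      ext z
      simp only [Set.mem_insert_iff, Set.mem_singleton_iff]
      tauto
    have hA' : Avoids A {(a, 0), (e, f), (c, d)} := by rw [hU]; exact hA
    exact key A a e f c d ha hf hd hgt he0 hef0 hc0 hcd0
      (by omega) (by omega) (by omega) (by omega) hA'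
end

section
/- If a ≥ 1, d is odd, and d < a, then U = {(a,0), (0,0)} ∪ {(c,d) ∈ B : max(c, c+d) < a} is avoidable in the bicyclic semigroup B. -/
/-- The coloring used on the second coordinate. -/
def mycol (d y : ℤ) : Prop := |d| < 2 * (y % d) ∨ (y % d = 0 ∧ 0 < y * d)

lemma auxpos (d m : ℤ) (hd0 : d ≠ 0) : 0 < (d * m) * d ↔ 0 < m := by
  have hdd : 0 < d * d := mul_self_pos.mpr hd0
  constructor <;> intro h <;> nlinarith

lemma key_s18 (d : ℤ) (hd : Odd d) (y z : ℤ)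
    (hsum : y + z = d ∨ (z = -y ∧ y ≠ 0)) :
    ¬ (mycol d y ↔ mycol d z) := by
  obtain ⟨w, hw⟩ := hd
  have hd0 : d ≠ 0 := by omega
  set q := y % d with hqdef
  set r := z % d with hrdef
  have hq0 : 0 ≤ q := Int.emod_nonneg y hd0
  have hr0 : 0 ≤ r := Int.emod_nonneg z hd0
  have hq1 : q < |d| := by have := Int.emod_lt y hd0; rw [Int.natCast_natAbs] at this; exact this
  have hr1 : r < |d| := by have := Int.emod_lt z hd0; rw [Int.natCast_natAbs] at this; exact this
  have hdy : d ∣ y - q := Int.dvd_self_sub_of_emod_eq rfl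
  have hdz : d ∣ z - r := Int.dvd_self_sub_of_emod_eq rfl
  have hyz : d ∣ (y + z) := by
    rcases hsum with h | ⟨h, -⟩
    · rw [h]
    · rw [h]; simp
  have hdqr : d ∣ q + r := by
    have h1 : q + r = (y + z) - (y - q) - (z - r) := by ring
    rw [h1]
    exact dvd_sub (dvd_sub hyz hdy) hdz
  obtain ⟨k, hk⟩ := (abs_dvd d (q + r)).mpr hdqr
  have habspos : 0 < |d| := abs_pos.mpr hd0
  have hk0 : 0 ≤ k := by nlinarith
  have hk2 : k < 2 := by nlinarith
  have habs : |d| = d ∨ |d| = -d := abs_choice d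
  intro hiff
  interval_cases k
  · -- q = r = 0 : both multiples of d
    have hq : q = 0 := by omega
    have hr : r = 0 := by omega
    have hy : d ∣ y := Int.dvd_of_emod_eq_zero hq
    have hz : d ∣ z := Int.dvd_of_emod_eq_zero hr
    obtain ⟨m, hm⟩ := hy
    obtain ⟨n, hn⟩ := hz
    have hmy : mycol d y ↔ 0 < m := by
      unfold mycol
      rw [← hqdef, hq, hm]
      constructor
      · rintro (h | ⟨-, h⟩)
        · omega
        · exact (auxpos d m hd0).mp h
      · intro h
        exact Or.inr ⟨rfl, (auxpos d m hd0).mpr h⟩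
    have hmz : mycol d z ↔ 0 < n := by
      unfold mycol
      rw [← hrdef, hr, hn]
      constructor
      · rintro (h | ⟨-, h⟩)
        · omega
        · exact (auxpos d n hd0).mp h
      · intro h
        exact Or.inr ⟨rfl, (auxpos d n hd0).mpr h⟩
    rw [hmy, hmz] at hiff
    rcases hsum with h | ⟨h, hy0⟩
    · -- y + z = d, so m + n = 1
      have hmn1 : d * (m + n) = d * 1 := by rw [mul_add, mul_one, ← hm, ← hn, h]
      have hmn : m + n = 1 := mul_left_cancel₀ hd0 hmn1
      omega
    · -- z = -y, y ≠ 0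
      have hnm1 : d * n = d * (-m) := by rw [← hn, h, hm]; ring
      have hnm : n = -m := mul_left_cancel₀ hd0 hnm1
      have hm0 : m ≠ 0 := by rintro rfl; simp at hm; exact hy0 hm
      omega
  · -- q + r = |d|, both nonzero
    have hqne : q ≠ 0 := by omega
    have hrne : r ≠ 0 := by omega
    unfold mycol at hiff
    rw [← hqdef, ← hrdef] at hiff
    by_cases hcy : |d| < 2 * q
    · have := hiff.mp (Or.inl hcy)
      rcases this with h | ⟨h, -⟩ <;> omega
    · have hny : ¬ (|d| < 2 * q ∨ (q = 0 ∧ 0 < y * d)) := by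
        rintro (h | ⟨h, -⟩) <;> omega
      have hnz : ¬ (|d| < 2 * r ∨ (r = 0 ∧ 0 < z * d)) := by
        rintro h; exact hny (hiff.mpr h)
      have h2r : ¬ |d| < 2 * r := fun h => hnz (Or.inl h)
      omega

theorem stmt18 (a d : ℤ) (ha : 1 ≤ a) (hd : Odd d) (hda : d < a) :
    Avoidable ({(a, 0), (0, 0)} ∪
      {p : ℤ × ℤ | inB p ∧ p.2 = d ∧ max p.1 (p.1 + p.2) < a}) := by
  have hd0 : d ≠ 0 := by obtain ⟨w, hw⟩ := hd; omega
  have habspos : 0 < |d| := abs_pos.mpr hd0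
  refine ⟨{p : ℤ × ℤ | p = (a, 0) ∨ mycol d p.2}, ?_⟩
  rintro ⟨s1, s2⟩ ⟨t1, t2⟩ hs ht hne hiff hmem
  simp only [Set.mem_union, Set.mem_insert_iff, Set.mem_singleton_iff,
    Set.mem_setOf_eq, bmul, Prod.mk.injEq] at hmem
  simp only [Set.mem_setOf_eq, Prod.mk.injEq] at hiff
  obtain ⟨hs1, hs2⟩ := hs
  obtain ⟨ht1, ht2⟩ := ht
  rcases hmem with (⟨h1, h2⟩ | ⟨h1, h2⟩) | ⟨-, h2, h3⟩
  · -- product is (a, 0)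
    have ht2s2 : t2 = -s2 := by omega
    by_cases hn : s2 = 0
    · -- both second coords zero: max t1 s1 = a, colors are s1 = a / t1 = a
      subst hn
      have ht20 : t2 = 0 := by omega
      subst ht20
      have hc0 : ¬ mycol d 0 := by
        unfold mycol
        rintro (h | ⟨-, h⟩)
        · simp at h; omega
        · simp at h
      have hiff' : s1 = a ↔ t1 = a := by
        constructor
        · intro h; rcases hiff.mp (Or.inl (by simp [h])) with h' | h'
          · exact h'.1
          · exact absurd h' hc0
        · intro h; rcases hiff.mpr (Or.inl (by simp [h])) with h' | h'
          · exact h'.1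
          · exact absurd h' hc0
      have hmax : t1 = a ∨ s1 = a := by
        rcases max_cases (t1 + (0 : ℤ)) s1 with ⟨hm, hle⟩ | ⟨hm, hle⟩ <;>
          rw [hm] at h1 <;> omega
      rcases hmax with h | h
      · have h' := hiff'.mpr h; exact hne (by simp [h', h])
      · have h' := hiff'.mp h; exact hne (by simp [h', h])
    · -- s2 ≠ 0 : colors on second coordinates must agree, contradiction
      have hka := key_s18 d hd s2 t2 (Or.inr ⟨ht2s2, hn⟩)
      apply hka
      constructor
      · intro h
        rcases hiff.mp (Or.inr h) with h' | h'
        · exact absurd h'.2 (by omega)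
        · exact h'
      · intro h
        rcases hiff.mpr (Or.inr h) with h' | h'
        · exact absurd h'.2 hn
        · exact h'
  · -- product is (0, 0)
    have ht2s2 : t2 = -s2 := by omega
    have hle1 : t1 + t2 ≤ max (t1 + t2) s1 := le_max_left _ _
    have hle2 : s1 ≤ max (t1 + t2) s1 := le_max_right _ _
    have ht10 : t1 = 0 := by omega
    have hs1t2 : s1 = t2 := by omega
    by_cases hn : t2 = 0
    · exact hne (by rw [Prod.mk.injEq]; omega)
    · have hka := key_s18 d hd s2 t2 (Or.inr ⟨ht2s2, by omega⟩)
      apply hka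
      constructor
      · intro h
        rcases hiff.mp (Or.inr h) with h' | h'
        · exact absurd h'.2 hn
        · exact h'
      · intro h
        rcases hiff.mpr (Or.inr h) with h' | h'
        · exact absurd h'.2 (by omega)
        · exact h'
  · -- product is in the row {(c, d) : max c (c+d) < a}
    have hsum : s2 + t2 = d := h2
    have hc1 : max (t1 + t2) s1 - t2 < a := lt_of_le_of_lt (le_max_left _ _) h3
    have hc2 : max (t1 + t2) s1 + s2 < a := by
      have := lt_of_le_of_lt (le_max_right _ _) h3; omega
    by_cases hsa : s1 = a ∧ s2 = 0
    · have := le_max_right (t1 + t2) s1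
      omega
    by_cases hta : t1 = a ∧ t2 = 0
    · have := le_max_left (t1 + t2) s1
      omega
    · have hka := key_s18 d hd s2 t2 (Or.inl hsum)
      apply hka
      constructor
      · intro h
        rcases hiff.mp (Or.inr h) with h' | h'
        · exact absurd h' hta
        · exact h'
      · intro h
        rcases hiff.mpr (Or.inr h) with h' | h'
        · exact absurd h' hsa
        · exact h'
end

section
/- If d is odd, then U = {(0,0)} ∪ {(e,f) ∈ B : f = d} is avoidable in the bicyclic semigroup B. -/
lemma sum_ediv_odd (d a : ℤ) (hd : d ≠ 0) (h : ¬ d ∣ a) : Odd (a / d + (-a) / d) := by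
  have h1 := Int.mul_ediv_add_emod a d
  have h2 := Int.mul_ediv_add_emod (-a) d
  have hr1 : 0 ≤ a % d := Int.emod_nonneg a hd
  have hr2 : 0 ≤ (-a) % d := Int.emod_nonneg (-a) hd
  have hl1 : a % d < |d| := Int.emod_lt_abs a hd
  have hl2 : (-a) % d < |d| := Int.emod_lt_abs (-a) hd
  have hz1 : a % d ≠ 0 := fun hc => h (Int.dvd_of_emod_eq_zero hc)
  have hdvd : d ∣ (a % d + (-a) % d) := by
    have heq : a % d + (-a) % d = d * (-(a/d) - ((-a)/d)) := by linarith [h1, h2, (by ring : d * (-(a/d) - ((-a)/d)) = -(d * (a/d)) - d * ((-a)/d))]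
    rw [heq]; exact Dvd.intro _ rfl
  have hsum : a % d + (-a) % d = |d| := by
    have habs : |d| ∣ (a % d + (-a) % d) := (abs_dvd _ _).mpr hdvd
    have hpos : 0 < a % d + (-a) % d := by omega
    have hle : |d| ≤ a % d + (-a) % d := Int.le_of_dvd hpos habs
    have hdvd2 : |d| ∣ (a % d + (-a) % d - |d|) := dvd_sub habs dvd_rfl
    have hz : a % d + (-a) % d - |d| = 0 := by
      refine Int.eq_zero_of_dvd_of_natAbs_lt_natAbs hdvd2 ?_
      have h0 : 0 < |d| := abs_pos.mpr hd
      omega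
    omega
  have hmul : d * (a / d + (-a) / d) = -|d| := by
    have hh : d * (a/d + (-a)/d) = (d * (a/d) + a % d) + (d * ((-a)/d) + (-a) % d) - (a % d + (-a) % d) := by ring
    rw [hh, h1, h2, hsum]; ring
  rcases abs_choice d with habs | habs
  · have : a / d + (-a) / d = -1 :=
      mul_left_cancel₀ hd (by rw [hmul, habs]; ring : d * (a / d + (-a) / d) = d * (-1))
    rw [this]; exact ⟨-1, by ring⟩
  · have : a / d + (-a) / d = 1 :=
      mul_left_cancel₀ hd (by rw [hmul, habs]; ring : d * (a / d + (-a) / d) = d * 1)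
    rw [this]; exact ⟨0, by ring⟩

lemma odd_not_dvd_two_mul (d a : ℤ) (hd : Odd d) (h : ¬ d ∣ a) : ¬ d ∣ 2 * a := by
  rintro ⟨m, hm⟩
  rcases Int.even_or_odd m with he | ho
  · obtain ⟨m', rfl⟩ := he
    refine h ⟨m', ?_⟩
    have h2 : 2 * a = 2 * (d * m') := by rw [hm]; ring
    omega
  · have hodd : Odd (d * m) := hd.mul ho
    rw [← hm] at hodd
    exact (Int.not_odd_iff_even.mpr (even_two_mul a)) hodd

theorem stmt19 (d : ℤ) (hd : Odd d) :
    Avoidable ({(0, 0)} ∪ {p : ℤ × ℤ | inB p ∧ p.2 = d}) := by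
  have hd0 : d ≠ 0 := by rintro rfl; rw [Int.odd_iff] at hd; norm_num at hd
  set C : ℤ → Prop := fun m => if d ∣ m then 1 ≤ m / d else Odd (2 * m / d) with hC
  have K1 : ∀ b : ℤ, ¬ (C b ↔ C (d - b)) := by
    intro b hiff
    by_cases hb : d ∣ b
    · obtain ⟨n, rfl⟩ := hb
      have hb2 : d ∣ d - d * n := ⟨1 - n, by ring⟩
      simp only [hC, if_pos (Dvd.intro n rfl), if_pos hb2] at hiff
      have e1 : d * n / d = n := Int.mul_ediv_cancel_left n hd0
      have e2 : (d - d * n) / d = 1 - n := by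
        rw [show d - d * n = d * (1 - n) by ring, Int.mul_ediv_cancel_left _ hd0]
      rw [e1, e2] at hiff
      omega
    · have hb2 : ¬ d ∣ (d - b) := fun ⟨m, hm⟩ => hb ⟨1 - m, by linear_combination -hm⟩
      simp only [hC, if_neg hb, if_neg hb2] at hiff
      have he : 2 * (d - b) / d = -(2 * b) / d + 2 := by
        rw [show 2 * (d - b) = -(2 * b) + 2 * d by ring, Int.add_mul_ediv_right _ _ hd0]
      rw [he] at hiff
      have hodd := sum_ediv_odd d (2 * b) hd0 (odd_not_dvd_two_mul d b hd hb)
      simp only [Int.odd_iff] at hiff hodd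
      omega
  have K2 : ∀ k : ℤ, 1 ≤ k → ¬ (C k ↔ C (-k)) := by
    intro k hk hiff
    by_cases hb : d ∣ k
    · obtain ⟨n, rfl⟩ := hb
      have hb2 : d ∣ -(d * n) := ⟨-n, by ring⟩
      simp only [hC, if_pos (Dvd.intro n rfl), if_pos hb2] at hiff
      have e1 : d * n / d = n := Int.mul_ediv_cancel_left n hd0
      have e2 : -(d * n) / d = -n := by
        rw [show -(d * n) = d * (-n) by ring, Int.mul_ediv_cancel_left _ hd0]
      rw [e1, e2] at hiff
      have hn : n ≠ 0 := by rintro rfl; simp at hk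
      omega
    · have hb2 : ¬ d ∣ (-k) := fun ⟨m, hm⟩ => hb ⟨-m, by linear_combination -hm⟩
      simp only [hC, if_neg hb, if_neg hb2] at hiff
      have he : 2 * (-k) / d = -(2 * k) / d := by rw [show 2 * (-k) = -(2 * k) by ring]
      rw [he] at hiff
      have hodd := sum_ediv_odd d (2 * k) hd0 (odd_not_dvd_two_mul d k hd hb)
      simp only [Int.odd_iff] at hiff hodd
      omega
  refine ⟨{p : ℤ × ℤ | C p.2}, ?_⟩
  rintro ⟨a, b⟩ ⟨c, e⟩ ⟨ha1, ha2⟩ ⟨hc1, hc2⟩ hne hiff hU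
  simp only [Set.mem_setOf_eq] at hiff
  rcases hU with h0 | ⟨_, hf⟩
  · simp only [Set.mem_singleton_iff, bmul, Prod.mk.injEq] at h0
    obtain ⟨h01, h02⟩ := h0
    have hm := max_choice (c + e) a
    have hle1 : c + e ≤ max (c + e) a := le_max_left _ _
    have hle2 : a ≤ max (c + e) a := le_max_right _ _
    have hce : c = 0 ∧ a = e ∧ b = -e := by rcases hm with hm | hm <;> omega
    obtain ⟨rfl, rfl, rfl⟩ := hce
    have hene : a ≠ 0 := by rintro rfl; exact hne rfl
    exact K2 a (by omega) (Iff.symm hiff)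
  · simp only [bmul] at hf
    have hb : b = d - e := by omega
    rw [hb] at hiff
    exact K1 e (Iff.symm hiff)
end
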